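/- arXiv:0904.3374 — 3 statements merged into one kernel-verified Lean document; each statement's English description precedes it below -/
import Mathlib

section
/- In the commutative two-row diagram of abelian groups described in the context, s(B₀') ∩ i(ker α) = {0}: if b' ∈ B₀' and p ∈ P₀ with α(p) = 0 satisfy s(b') = i(p), then s(b') = i(p) = 0. -/
theorem AddMonoidHom.eq_zero_of_rightInverse_of_map_eq_zero {B B' : Type*}
    [AddZeroClass B] [AddZeroClass B'] {lam : B →+ B'} {s : B' →+ B}
    (hs : ∀ b', lam (s b') = b') {b' : B'} (h : lam (s b') = 0) : s b' = 0 := by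
  rw [hs b'] at h
  rw [h, map_zero]

theorem s_image_inter_i_ker_alpha_trivial_general
    {P₀ B₀ P₀' B₀' : Type*}
    [AddCommGroup P₀] [AddCommGroup B₀] [AddCommGroup P₀'] [AddCommGroup B₀']
    (i : P₀ →+ B₀) (i' : P₀' →+ B₀') (α : P₀ →+ P₀') (lam₀ : B₀ →+ B₀')
    (hsq3 : ∀ p, lam₀ (i p) = i' (α p))
    (s : B₀' →+ B₀) (hs : ∀ b', lam₀ (s b') = b') :
    ∀ (b' : B₀') (p : P₀), α p = 0 → s b' = i p → s b' = 0 ∧ i p = 0 := by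
  intro b' p hp hsp
  have hs0 : s b' = 0 :=
    AddMonoidHom.eq_zero_of_rightInverse_of_map_eq_zero hs (by rw [hsp, hsq3, hp, map_zero])
  exact ⟨hs0, hsp ▸ hs0⟩

/-- `s(B₀) ∩ i(ker α) = 0`. -/
theorem s_image_inter_i_ker_alpha_trivial
    {B₁ C₁ P₀ B₀ C₀ B₁' C₁' P₀' B₀' C₀' : Type*}
    [AddCommGroup B₁] [AddCommGroup C₁] [AddCommGroup P₀] [AddCommGroup B₀]
    [AddCommGroup C₀] [AddCommGroup B₁'] [AddCommGroup C₁'] [AddCommGroup P₀']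
    [AddCommGroup B₀'] [AddCommGroup C₀']
    (π₁ : B₁ →+ C₁) (d : C₁ →+ P₀) (i : P₀ →+ B₀) (π₀ : B₀ →+ C₀)
    (π₁' : B₁' →+ C₁') (d' : C₁' →+ P₀') (i' : P₀' →+ B₀') (π₀' : B₀' →+ C₀')
    (lam₁ : B₁ →+ B₁') (β₁ : C₁ →+ C₁') (α : P₀ →+ P₀') (lam₀ : B₀ →+ B₀')
    (β₀ : C₀ →+ C₀')
    (hsq1 : ∀ b, β₁ (π₁ b) = π₁' (lam₁ b))
    (hsq2 : ∀ c, α (d c) = d' (β₁ c))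
    (hsq3 : ∀ p, lam₀ (i p) = i' (α p))
    (hsq4 : ∀ b, β₀ (π₀ b) = π₀' (lam₀ b))
    (hexC₁ : Function.Exact ⇑π₁ ⇑d)
    (hexP₀ : Function.Exact ⇑d ⇑i)
    (hexB₀ : Function.Exact ⇑i ⇑π₀)
    (hexC₁' : Function.Exact ⇑π₁' ⇑d')
    (hexP₀' : Function.Exact ⇑d' ⇑i')
    (hlam₁ : Function.Surjective lam₁)
    (hβ₁ : Function.Bijective β₁)
    (hβ₀ : Function.Injective β₀)
    (s : B₀' →+ B₀) (hs : ∀ b', lam₀ (s b') = b') :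
    ∀ (b' : B₀') (p : P₀), α p = 0 → s b' = i p → s b' = 0 ∧ i p = 0 :=
  s_image_inter_i_ker_alpha_trivial_general i i' α lam₀ hsq3 s hs
end

section
/- In the commutative two-row diagram of abelian groups described in the context, B₀ = s(B₀') + i(ker α): every element of B₀ can be written as s(b') + i(p) with b' ∈ B₀' and p ∈ P₀ satisfying α(p) = 0. -/
/-!
Since `λ₀ ∘ s = id`, every `b₀` splits as `s (λ₀ b₀) + (b₀ - s (λ₀ b₀))` with the second summand in
`ker λ₀`, so it suffices to show `ker λ₀ ⊆ i(ker α)`. An element of `ker λ₀` dies under `π₀`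
(injectivity of `β₀`), hence equals `i p`; then `α p ∈ ker i' = im ∂'`, and lifting through the
surjection `β₁` gives `c` with `α (∂ c) = α p`, so `p - ∂ c ∈ ker α` has the same image `i p`.
-/

section DiagramChase

variable {C₁ P₀ B₀ C₀ C₁' P₀' B₀' C₀' : Type*}
  [AddCommGroup C₁] [AddCommGroup P₀] [AddCommGroup B₀] [AddCommGroup C₀]
  [AddCommGroup C₁'] [AddCommGroup P₀'] [AddCommGroup B₀'] [AddCommGroup C₀']

theorem AddMonoidHom.ker_le_range_of_exact_of_injective
    {i : P₀ →+ B₀} {π₀ : B₀ →+ C₀} {π₀' : B₀' →+ C₀'} {lam₀ : B₀ →+ B₀'} {β₀ : C₀ →+ C₀'}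
    (hsq : ∀ b, β₀ (π₀ b) = π₀' (lam₀ b)) (hex : Function.Exact i π₀)
    (hβ₀ : Function.Injective β₀) :
    lam₀.ker ≤ i.range := by
  intro b hb
  have hπ₀ : π₀ b = 0 := hβ₀ <| by
    rw [hsq, (AddMonoidHom.mem_ker).mp hb, map_zero, map_zero]
  exact (hex b).mp hπ₀

theorem AddMonoidHom.ker_inf_range_le_map_ker
    {d : C₁ →+ P₀} {i : P₀ →+ B₀} {d' : C₁' →+ P₀'} {i' : P₀' →+ B₀'}
    {β₁ : C₁ →+ C₁'} {α : P₀ →+ P₀'} {lam₀ : B₀ →+ B₀'}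
    (hsq₂ : ∀ c, α (d c) = d' (β₁ c)) (hsq₃ : ∀ p, lam₀ (i p) = i' (α p))
    (hex : Function.Exact d i) (hex' : Function.Exact d' i')
    (hβ₁ : Function.Surjective β₁) :
    lam₀.ker ⊓ i.range ≤ α.ker.map i := by
  rintro _ ⟨hb, p, rfl⟩
  have hi' : i' (α p) = 0 := by rw [← hsq₃]; exact hb
  obtain ⟨c', hc'⟩ := (hex' _).mp hi'
  obtain ⟨c, rfl⟩ := hβ₁ c'
  refine ⟨p - d c, ?_, ?_⟩
  · rw [SetLike.mem_coe, AddMonoidHom.mem_ker, map_sub, hsq₂, hc', sub_self]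
  · rw [map_sub, hex.apply_apply_eq_zero, sub_zero]

end DiagramChase

theorem decomposition_with_ker_alpha_general
    {C₁ P₀ B₀ C₀ C₁' P₀' B₀' C₀' : Type*}
    [AddCommGroup C₁] [AddCommGroup P₀] [AddCommGroup B₀]
    [AddCommGroup C₀] [AddCommGroup C₁'] [AddCommGroup P₀']
    [AddCommGroup B₀'] [AddCommGroup C₀']
    (d : C₁ →+ P₀) (i : P₀ →+ B₀) (π₀ : B₀ →+ C₀)
    (d' : C₁' →+ P₀') (i' : P₀' →+ B₀') (π₀' : B₀' →+ C₀')
    (β₁ : C₁ →+ C₁') (α : P₀ →+ P₀') (lam₀ : B₀ →+ B₀')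
    (β₀ : C₀ →+ C₀')
    (hsq2 : ∀ c, α (d c) = d' (β₁ c))
    (hsq3 : ∀ p, lam₀ (i p) = i' (α p))
    (hsq4 : ∀ b, β₀ (π₀ b) = π₀' (lam₀ b))
    (hexP₀ : Function.Exact ⇑d ⇑i)
    (hexB₀ : Function.Exact ⇑i ⇑π₀)
    (hexP₀' : Function.Exact ⇑d' ⇑i')
    (hβ₁ : Function.Bijective β₁)
    (hβ₀ : Function.Injective β₀)
    (s : B₀' →+ B₀) (hs : ∀ b', lam₀ (s b') = b') :
    ∀ b₀, ∃ (b' : B₀') (p : P₀), α p = 0 ∧ b₀ = s b' + i p := by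
  intro b₀
  have hker : b₀ - s (lam₀ b₀) ∈ lam₀.ker := by
    rw [AddMonoidHom.mem_ker, map_sub, hs, sub_self]
  have hrange := AddMonoidHom.ker_le_range_of_exact_of_injective hsq4 hexB₀ hβ₀ hker
  obtain ⟨p, hp, hip⟩ := AddMonoidHom.ker_inf_range_le_map_ker hsq2 hsq3 hexP₀ hexP₀' hβ₁.2
    ⟨hker, hrange⟩
  exact ⟨lam₀ b₀, p, hp, by rw [hip, add_sub_cancel]⟩

/-- `B₀ = s(B₀) + i(ker α)`. -/
theorem decomposition_with_ker_alpha
    {B₁ C₁ P₀ B₀ C₀ B₁' C₁' P₀' B₀' C₀' : Type*}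
    [AddCommGroup B₁] [AddCommGroup C₁] [AddCommGroup P₀] [AddCommGroup B₀]
    [AddCommGroup C₀] [AddCommGroup B₁'] [AddCommGroup C₁'] [AddCommGroup P₀']
    [AddCommGroup B₀'] [AddCommGroup C₀']
    (π₁ : B₁ →+ C₁) (d : C₁ →+ P₀) (i : P₀ →+ B₀) (π₀ : B₀ →+ C₀)
    (π₁' : B₁' →+ C₁') (d' : C₁' →+ P₀') (i' : P₀' →+ B₀') (π₀' : B₀' →+ C₀')
    (lam₁ : B₁ →+ B₁') (β₁ : C₁ →+ C₁') (α : P₀ →+ P₀') (lam₀ : B₀ →+ B₀')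
    (β₀ : C₀ →+ C₀')
    (hsq1 : ∀ b, β₁ (π₁ b) = π₁' (lam₁ b))
    (hsq2 : ∀ c, α (d c) = d' (β₁ c))
    (hsq3 : ∀ p, lam₀ (i p) = i' (α p))
    (hsq4 : ∀ b, β₀ (π₀ b) = π₀' (lam₀ b))
    (hexC₁ : Function.Exact ⇑π₁ ⇑d)
    (hexP₀ : Function.Exact ⇑d ⇑i)
    (hexB₀ : Function.Exact ⇑i ⇑π₀)
    (hexC₁' : Function.Exact ⇑π₁' ⇑d')
    (hexP₀' : Function.Exact ⇑d' ⇑i')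
    (hlam₁ : Function.Surjective lam₁)
    (hβ₁ : Function.Bijective β₁)
    (hβ₀ : Function.Injective β₀)
    (s : B₀' →+ B₀) (hs : ∀ b', lam₀ (s b') = b') :
    ∀ b₀, ∃ (b' : B₀') (p : P₀), α p = 0 ∧ b₀ = s b' + i p :=
  decomposition_with_ker_alpha_general d i π₀ d' i' π₀' β₁ α lam₀ β₀ hsq2 hsq3 hsq4 hexP₀ hexB₀
    hexP₀' hβ₁ hβ₀ s hs
end

section
/- In the commutative two-row diagram of abelian groups described in the context, the map B₀' × ker α → B₀ given by (b', p) ↦ s(b') + i(p) is an isomorphism of abelian groups; in particular B₀ is the internal direct sum of s(B₀') and i(ker α), so B₀ ≅ B₀' ⊕ ker α. -/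
/-!
Exactness of the top row at `B₀` and the square `lam₀ ∘ i = i' ∘ α` show that `i` maps `ker α`
onto `ker lam₀` (a diagram chase through `β₀` injective, `β₁` surjective and exactness of the
bottom row at `P₀'`), and a second chase (through `β₁` injective, `lam₁` surjective and exactness
at `C₁`, `P₀`, `C₁'`) shows that `i` is injective on `ker α`. So `ker α → B₀ → B₀'` is a short
exact sequence, and the section `s` splits it.
-/

namespace AddMonoidHom

theorem bijective_section_add_of_exact {K B B' : Type*} [AddCommGroup K] [AddCommGroup B]
    [AddCommGroup B'] {j : K →+ B} {g : B →+ B'} (hexact : Function.Exact j g)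
    (hj : Function.Injective j) {s : B' →+ B} (hs : Function.LeftInverse g s) :
    Function.Bijective fun x : B' × K ↦ s x.1 + j x.2 := by
  have hgj : ∀ k, g (j k) = 0 := hexact.apply_apply_eq_zero
  constructor
  · rintro ⟨b₁, k₁⟩ ⟨b₂, k₂⟩ h
    have hb : b₁ = b₂ := by simpa [hs b₁, hs b₂, hgj] using congrArg g h
    subst hb
    exact Prod.ext rfl (hj (add_left_cancel h))
  · intro b
    obtain ⟨k, hk⟩ := (hexact (b - s (g b))).mp (by rw [map_sub, hs, sub_self])
    exact ⟨(g b, k), by simp only [hk, add_sub_cancel]⟩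

end AddMonoidHom

section DiagramChase

variable {B₁ C₁ P₀ B₀ C₀ B₁' C₁' P₀' B₀' C₀' : Type*}
    [AddCommGroup B₁] [AddCommGroup C₁] [AddCommGroup P₀] [AddCommGroup B₀]
    [AddCommGroup C₀] [AddCommGroup B₁'] [AddCommGroup C₁'] [AddCommGroup P₀']
    [AddCommGroup B₀'] [AddCommGroup C₀']
    {π₁ : B₁ →+ C₁} {d : C₁ →+ P₀} {i : P₀ →+ B₀} {π₀ : B₀ →+ C₀}
    {π₁' : B₁' →+ C₁'} {d' : C₁' →+ P₀'} {i' : P₀' →+ B₀'} {π₀' : B₀' →+ C₀'}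
    {lam₁ : B₁ →+ B₁'} {β₁ : C₁ →+ C₁'} {α : P₀ →+ P₀'} {lam₀ : B₀ →+ B₀'} {β₀ : C₀ →+ C₀'}

theorem injective_comp_ker_subtype
    (hsq1 : ∀ b, β₁ (π₁ b) = π₁' (lam₁ b)) (hsq2 : ∀ c, α (d c) = d' (β₁ c))
    (hexC₁ : Function.Exact π₁ d) (hexP₀ : Function.Exact d i) (hexC₁' : Function.Exact π₁' d')
    (hlam₁ : Function.Surjective lam₁) (hβ₁ : Function.Injective β₁) :
    Function.Injective (i.comp α.ker.subtype) := by
  rw [injective_iff_map_eq_zero]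
  rintro ⟨p, hαp⟩ hip
  obtain ⟨c, rfl⟩ := (hexP₀ p).mp hip
  obtain ⟨b', hb'⟩ := (hexC₁' (β₁ c)).mp (by rw [← hsq2]; exact hαp)
  obtain ⟨b, rfl⟩ := hlam₁ b'
  obtain rfl : π₁ b = c := hβ₁ (by rw [hsq1, hb'])
  exact Subtype.ext (hexC₁.apply_apply_eq_zero b)

theorem exact_comp_ker_subtype
    (hsq2 : ∀ c, α (d c) = d' (β₁ c)) (hsq3 : ∀ p, lam₀ (i p) = i' (α p))
    (hsq4 : ∀ b, β₀ (π₀ b) = π₀' (lam₀ b))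
    (hexP₀ : Function.Exact d i) (hexB₀ : Function.Exact i π₀)
    (hexP₀' : Function.Exact d' i')
    (hβ₁ : Function.Surjective β₁) (hβ₀ : Function.Injective β₀) :
    Function.Exact (i.comp α.ker.subtype) lam₀ := by
  intro b
  constructor
  · intro hb
    obtain ⟨p, rfl⟩ := (hexB₀ b).mp (hβ₀ (by rw [hsq4, hb, map_zero, map_zero]))
    obtain ⟨c', hc'⟩ := (hexP₀' (α p)).mp (by rw [← hsq3, hb])
    obtain ⟨c, rfl⟩ := hβ₁ c'
    -- correct `p` by a boundary so that it lands in `ker α` without changing `i p`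
    refine ⟨⟨p - d c, by rw [AddMonoidHom.mem_ker, map_sub, hsq2, hc', sub_self]⟩, ?_⟩
    simp only [AddMonoidHom.coe_comp, Function.comp_apply, AddSubgroup.coe_subtype, map_sub,
      hexP₀.apply_apply_eq_zero, sub_zero]
  · rintro ⟨⟨p, hαp⟩, rfl⟩
    simp only [AddMonoidHom.coe_comp, Function.comp_apply, AddSubgroup.coe_subtype, hsq3,
      AddMonoidHom.mem_ker.mp hαp, map_zero]

end DiagramChase

/-- `(b', p) ↦ s b' + i p` is an isomorphism
`B₀ × ker α ≃+ B₀`. -/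
theorem direct_sum_decomposition
    {B₁ C₁ P₀ B₀ C₀ B₁' C₁' P₀' B₀' C₀' : Type*}
    [AddCommGroup B₁] [AddCommGroup C₁] [AddCommGroup P₀] [AddCommGroup B₀]
    [AddCommGroup C₀] [AddCommGroup B₁'] [AddCommGroup C₁'] [AddCommGroup P₀']
    [AddCommGroup B₀'] [AddCommGroup C₀']
    (π₁ : B₁ →+ C₁) (d : C₁ →+ P₀) (i : P₀ →+ B₀) (π₀ : B₀ →+ C₀)
    (π₁' : B₁' →+ C₁') (d' : C₁' →+ P₀') (i' : P₀' →+ B₀') (π₀' : B₀' →+ C₀')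
    (lam₁ : B₁ →+ B₁') (β₁ : C₁ →+ C₁') (α : P₀ →+ P₀') (lam₀ : B₀ →+ B₀')
    (β₀ : C₀ →+ C₀')
    (hsq1 : ∀ b, β₁ (π₁ b) = π₁' (lam₁ b))
    (hsq2 : ∀ c, α (d c) = d' (β₁ c))
    (hsq3 : ∀ p, lam₀ (i p) = i' (α p))
    (hsq4 : ∀ b, β₀ (π₀ b) = π₀' (lam₀ b))
    (hexC₁ : Function.Exact ⇑π₁ ⇑d)
    (hexP₀ : Function.Exact ⇑d ⇑i)
    (hexB₀ : Function.Exact ⇑i ⇑π₀)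
    (hexC₁' : Function.Exact ⇑π₁' ⇑d')
    (hexP₀' : Function.Exact ⇑d' ⇑i')
    (hlam₁ : Function.Surjective lam₁)
    (hβ₁ : Function.Bijective β₁)
    (hβ₀ : Function.Injective β₀)
    (s : B₀' →+ B₀) (hs : ∀ b', lam₀ (s b') = b') :
    ∃ e : B₀' × α.ker ≃+ B₀,
      ∀ (b' : B₀') (p : α.ker), e (b', p) = s b' + i (p : P₀) := by
  let f : B₀' × α.ker →+ B₀ :=
    s.comp (AddMonoidHom.fst _ _) + (i.comp α.ker.subtype).comp (AddMonoidHom.snd _ _)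
  have hf : Function.Bijective f :=
    AddMonoidHom.bijective_section_add_of_exact
      (exact_comp_ker_subtype hsq2 hsq3 hsq4 hexP₀ hexB₀ hexP₀' hβ₁.2 hβ₀)
      (injective_comp_ker_subtype hsq1 hsq2 hexC₁ hexP₀ hexC₁' hlam₁ hβ₁.1) hs
  exact ⟨AddEquiv.ofBijective f hf, fun _ _ ↦ rfl⟩
end
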